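/- arXiv:2103.15806 — 4 statements merged into one kernel-verified Lean document; each statement's English description precedes it below -/
import Mathlib

section
/- Let k be a field and 𝔤 a finite-dimensional Lie algebra over k whose Killing form κ is nondegenerate. Let 𝔲 ⊆ 𝔤 be a Lie subalgebra and set 𝔥 := N_𝔤(𝔲). Assume that (i) 𝔲 is exactly the set of ad-nilpotent elements of the solvable radical rad(𝔥), and (ii) the orthogonal 𝔲^⊥ of 𝔲 with respect to κ is a Lie subalgebra of 𝔤. Then 𝔥 = 𝔲^⊥ and 𝔲 = 𝔥^⊥; that is, 𝔲 is the orthogonal of its normalizer for the Killing form of 𝔤. -/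
/-!
Every element of `𝔲` is ad-nilpotent, so by Engel's theorem `𝔤` is a nilpotent `𝔲`-module and its
lower central series as a `𝔲`-module reaches zero. As `𝔲` is an ideal of `𝔥 = N_𝔤(𝔲)`, the terms of
this series are `𝔥`-stable; hence for `x ∈ 𝔥` and `y ∈ 𝔲` the endomorphism `ad x ∘ ad y` pushes
each term into the next, is nilpotent and has trace zero: `𝔥 ⊆ 𝔲^⊥`. Conversely, for `x ∈ 𝔲^⊥` and
`y ∈ 𝔲`, invariance gives `κ(z, ⁅x, y⁆) = -κ(⁅x, z⁆, y) = 0` for every `z ∈ 𝔲^⊥` because `𝔲^⊥` is a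
subalgebra, so `⁅x, y⁆ ∈ 𝔲^⊥^⊥ = 𝔲`. Finally `𝔥^⊥ = 𝔲^⊥^⊥ = 𝔲`.
-/

open LieAlgebra LieModule

namespace LieIdeal

variable {R L M : Type*} [CommRing R] [LieRing L] [LieAlgebra R L]
  [AddCommGroup M] [Module R M] [LieRingModule L M] [LieModule R L M]

lemma isNilpotent_toEnd_comp_toEnd_of_mem (I : LieIdeal R L) [LieModule.IsNilpotent I M]
    (x : L) {y : L} (hy : y ∈ I) : IsNilpotent (toEnd R L M x ∘ₗ toEnd R L M y) := by
  obtain ⟨n, hn⟩ := LieModule.IsNilpotent.nilpotent R I M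
  have hlcs : I.lcs M n = ⊥ := by
    rw [← LieSubmodule.toSubmodule_eq_bot, coe_lcs_eq, hn, LieSubmodule.bot_toSubmodule]
  -- `y` moves `I.lcs M i` one step down, while `x` preserves it as an `L`-submodule.
  have hpow : ∀ i (m : M), ((toEnd R L M x ∘ₗ toEnd R L M y) ^ i) m ∈ I.lcs M i := by
    intro i
    induction i with
    | zero => simp
    | succ i ih =>
      intro m
      rw [pow_succ', Module.End.mul_apply, lcs_succ]
      exact LieSubmodule.lie_mem _ (LieSubmodule.lie_mem_lie hy (ih m))
  refine ⟨n, LinearMap.ext fun m => ?_⟩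
  simpa [hlcs] using hpow n m

lemma traceForm_eq_zero_of_mem [IsReduced R] (I : LieIdeal R L) [LieModule.IsNilpotent I M]
    (x : L) {y : L} (hy : y ∈ I) : traceForm R L M x y = 0 :=
  (LinearMap.isNilpotent_trace_of_isNilpotent
    (I.isNilpotent_toEnd_comp_toEnd_of_mem x hy)).eq_zero

end LieIdeal

namespace LieSubalgebra

lemma normalizer_le_killingForm_orthogonal {R L : Type*} [CommRing R] [IsReduced R] [LieRing L]
    [LieAlgebra R L] [IsNoetherian R L] (u : LieSubalgebra R L)
    (hnil : ∀ z ∈ u, IsNilpotent (ad R L z)) :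
    u.normalizer.toSubmodule ≤ (killingForm R L).orthogonal u.toSubmodule := by
  obtain ⟨I, hI⟩ := u.exists_nested_lieIdeal_ofLe_normalizer u.le_normalizer le_rfl
  have hmem : ∀ y : u.normalizer, y ∈ I ↔ (y : L) ∈ u := by
    intro y
    rw [← LieIdeal.mem_toLieSubalgebra, hI, mem_ofLe]
  have : LieModule.IsNilpotent I L := by
    rw [isNilpotent_iff_forall' (R := R)]
    exact fun ⟨y, hy⟩ => hnil y ((hmem y).1 hy)
  intro x hx y hy
  rw [traceForm_comm]
  exact I.traceForm_eq_zero_of_mem (M := L) ⟨x, hx⟩ ((hmem ⟨y, u.le_normalizer hy⟩).2 hy)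

lemma orthogonal_le_normalizer {K L : Type*} [Field K] [LieRing L] [LieAlgebra K L]
    [FiniteDimensional K L] {B : LinearMap.BilinForm K L} (hnd : B.Nondegenerate)
    (hrefl : B.IsRefl) (hinv : B.lieInvariant L) (u : LieSubalgebra K L)
    (hperp : ∀ x ∈ B.orthogonal u.toSubmodule, ∀ y ∈ B.orthogonal u.toSubmodule,
      ⁅x, y⁆ ∈ B.orthogonal u.toSubmodule) :
    B.orthogonal u.toSubmodule ≤ u.normalizer.toSubmodule := by
  intro x hx
  rw [mem_toSubmodule, mem_normalizer_iff]
  intro y hy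
  rw [← mem_toSubmodule, ← B.orthogonal_orthogonal hnd hrefl u.toSubmodule]
  intro z hz
  rw [← neg_eq_zero, ← hinv]
  exact hrefl _ _ (hperp x hx z hz y hy)

end LieSubalgebra

/-- Let `k` be a field and `𝔤` a finite-dimensional Lie algebra over `k` whose
Killing form `κ` is nondegenerate.  Let `𝔲 ⊆ 𝔤` be a Lie subalgebra and `𝔥 := N_𝔤(𝔲)` its
normalizer.  Assume that (i) `𝔲` is exactly the set of ad-nilpotent elements of the solvable
radical `rad(𝔥)` and (ii) the orthogonal `𝔲^⊥` of `𝔲` for `κ` is a Lie subalgebra of `𝔤`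
(i.e. closed under the bracket).  Then `𝔥 = 𝔲^⊥` and `𝔲 = 𝔥^⊥`. -/
theorem normalizer_eq_orthogonal_and_orthogonal_of_normalizer
    {k L : Type*} [Field k] [LieRing L] [LieAlgebra k L] [FiniteDimensional k L]
    (hnd : (killingForm k L).Nondegenerate)
    (u : LieSubalgebra k L)
    (hu : ∀ x : L, x ∈ u ↔ ∃ hx : x ∈ u.normalizer,
      (⟨x, hx⟩ : u.normalizer) ∈ LieAlgebra.radical k u.normalizer ∧
        IsNilpotent (LieAlgebra.ad k L x))
    (hperp : ∀ x y : L, (∀ z ∈ u, killingForm k L x z = 0) →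
      (∀ z ∈ u, killingForm k L y z = 0) →
      ∀ z ∈ u, killingForm k L ⁅x, y⁆ z = 0) :
    (∀ x : L, x ∈ u.normalizer ↔ ∀ y ∈ u, killingForm k L x y = 0) ∧
    (∀ x : L, x ∈ u ↔ ∀ y ∈ u.normalizer, killingForm k L x y = 0) := by
  set κ := killingForm k L
  have hrefl : κ.IsRefl := (traceForm_isSymm k L L).isRefl
  have mem_orthogonal (N : Submodule k L) (x : L) : x ∈ κ.orthogonal N ↔ ∀ y ∈ N, κ x y = 0 := by
    simp only [LinearMap.BilinForm.mem_orthogonal_iff, κ, traceForm_comm k L L _ x]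
  have hnil (z : L) (hz : z ∈ u) : IsNilpotent (ad k L z) := ((hu z).1 hz).2.2
  have hnormalizer : u.normalizer.toSubmodule = κ.orthogonal u.toSubmodule :=
    le_antisymm (u.normalizer_le_killingForm_orthogonal hnil)
      (u.orthogonal_le_normalizer hnd hrefl (traceForm_lieInvariant k L L) <| by
        simpa only [mem_orthogonal, LieSubalgebra.mem_toSubmodule] using fun x hx y hy => hperp x y hx hy)
  have hself : u.toSubmodule = κ.orthogonal u.normalizer.toSubmodule := by
    rw [hnormalizer, κ.orthogonal_orthogonal hnd hrefl]
  refine ⟨fun x => ?_, fun x => ?_⟩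
  · rw [← LieSubalgebra.mem_toSubmodule, hnormalizer]
    exact mem_orthogonal _ x
  · rw [← LieSubalgebra.mem_toSubmodule, hself]
    exact mem_orthogonal _ x
end

section
/- Let 𝔤 be a finite-dimensional Lie algebra over a field k whose solvable radical is trivial (rad(𝔤) = 0). Let 𝔮 ⊊ 𝔤 be a maximal proper Lie subalgebra and let 𝔲 be a nonzero ideal of 𝔮 all of whose elements are ad-nilpotent in 𝔤. Then 𝔮 = N_𝔤(𝔲). -/
section

open LieAlgebra

variable {R L : Type*} [CommRing R] [LieRing L] [LieAlgebra R L]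

theorem LieSubalgebra.exists_lieIdeal_coe_eq_of_normalizer_eq_top {H : LieSubalgebra R L}
    (hH : H.normalizer = ⊤) : ∃ I : LieIdeal R L, (I : LieSubalgebra R L) = H :=
  H.exists_lieIdeal_coe_eq_iff.mpr fun x _ hy ↦
    H.ideal_in_normalizer (hH ▸ LieSubalgebra.mem_top x) hy

/-- Engel's theorem for an ideal: ad-nilpotence in `L` restricts to ad-nilpotence in `I`. -/
theorem LieIdeal.isNilpotent_of_forall_isNilpotent_ad [IsNoetherian R L] (I : LieIdeal R L)
    (hI : ∀ x ∈ I, IsNilpotent (ad R L x)) : LieRing.IsNilpotent I := by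
  rw [isNilpotent_iff_forall (R := R)]
  exact fun x ↦ (I : LieSubalgebra R L).isNilpotent_ad_of_isNilpotent_ad (hI x x.2)

theorem LieSubalgebra.eq_bot_of_normalizer_eq_top [HasTrivialRadical R L] [IsNoetherian R L]
    {H : LieSubalgebra R L} (hH : H.normalizer = ⊤) (hnil : ∀ x ∈ H, IsNilpotent (ad R L x)) :
    H = ⊥ := by
  obtain ⟨I, rfl⟩ := exists_lieIdeal_coe_eq_of_normalizer_eq_top hH
  have : LieRing.IsNilpotent I := I.isNilpotent_of_forall_isNilpotent_ad hnil
  rw [HasTrivialRadical.eq_bot_of_isSolvable I]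
  rfl

end

theorem maximal_subalgebra_eq_normalizer_of_nil_ideal_general
    {k L : Type*} [Field k] [LieRing L] [LieAlgebra k L] [FiniteDimensional k L]
    (hrad : LieAlgebra.radical k L = ⊥)
    (q : LieSubalgebra k L)
    (hq_max : ∀ r : LieSubalgebra k L, q ≤ r → r = q ∨ r = ⊤)
    (u : LieSubalgebra k L)
    (hu_ne : u ≠ ⊥)
    (hu_ideal : ∀ x ∈ q, ∀ y ∈ u, ⁅x, y⁆ ∈ u)
    (hu_nil : ∀ x ∈ u, IsNilpotent (LieAlgebra.ad k L x)) :
    q = u.normalizer := by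
  have : LieAlgebra.HasTrivialRadical k L := ⟨hrad⟩
  have hq_le : q ≤ u.normalizer := fun x hx ↦ (u.mem_normalizer_iff x).mpr (hu_ideal x hx)
  rcases hq_max u.normalizer hq_le with h | h
  · exact h.symm
  · exact absurd (u.eq_bot_of_normalizer_eq_top h hu_nil) hu_ne

/-- Let `𝔤` be a finite-dimensional Lie algebra over a field `k` with trivial
solvable radical.  Let `𝔮 ⊊ 𝔤` be a maximal proper Lie subalgebra and `𝔲` a nonzero ideal of
`𝔮` all of whose elements are ad-nilpotent in `𝔤`.  Then `𝔮 = N_𝔤(𝔲)`. -/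
theorem maximal_subalgebra_eq_normalizer_of_nil_ideal
    {k L : Type*} [Field k] [LieRing L] [LieAlgebra k L] [FiniteDimensional k L]
    (hrad : LieAlgebra.radical k L = ⊥)
    (q : LieSubalgebra k L)
    (hq_proper : q ≠ ⊤)
    (hq_max : ∀ r : LieSubalgebra k L, q ≤ r → r = q ∨ r = ⊤)
    (u : LieSubalgebra k L)
    (hu_ne : u ≠ ⊥)
    (hu_le : u ≤ q)
    (hu_ideal : ∀ x ∈ q, ∀ y ∈ u, ⁅x, y⁆ ∈ u)
    (hu_nil : ∀ x ∈ u, IsNilpotent (LieAlgebra.ad k L x)) :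
    q = u.normalizer :=
  maximal_subalgebra_eq_normalizer_of_nil_ideal_general hrad q hq_max u hu_ne hu_ideal hu_nil
end

section
/- Let k be a field of characteristic 3 and let E_{ij} denote the matrix units of 𝔤𝔩₃(k). Set X := E₁₂ + E₂₃ and Y := E₂₁ + 2·E₃₂. Then: (i) ⁅X,Y⁆ = XY − YX equals the identity matrix; (ii) for all a, b ∈ k, (aX + bY)³ = 0; consequently the images of X and Y in the quotient Lie algebra 𝔭𝔤𝔩₃(k) := 𝔤𝔩₃(k)/(k·1) are linearly independent and span a two-dimensional abelian Lie subalgebra of 𝔭𝔤𝔩₃(k) all of whose elements are ad-nilpotent. -/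
/-!
`⁅X, Y⁆ = diag(1, 1, -2)` is scalar exactly in characteristic `3`, so there the images of `X`
and `Y` commute in `𝔭𝔤𝔩₃`. Every `M = aX + bY` satisfies `M³ = 3ab • M`, so in characteristic
`3` it is a nilpotent matrix; `ad M` is then nilpotent on `𝔤𝔩₃`, and this descends to the
quotient. The images are independent because a combination of the off-diagonal matrices `X`, `Y`
can only be scalar if it vanishes.
-/

open Matrix

attribute [local instance 100] LieRing.ofAssociativeRing

/-- The central ideal `k·1` of scalar matrices in `𝔤𝔩₃(k)`. -/
def scalarLieIdeal (k : Type*) [Field k] :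
    LieIdeal k (Matrix (Fin 3) (Fin 3) k) :=
  { Submodule.span k {(1 : Matrix (Fin 3) (Fin 3) k)} with
    lie_mem := by
      intro x m hm
      replace hm : m ∈ Submodule.span k {(1 : Matrix (Fin 3) (Fin 3) k)} := hm
      obtain ⟨c, rfl⟩ := Submodule.mem_span_singleton.mp hm
      show ⁅x, c • (1 : Matrix (Fin 3) (Fin 3) k)⁆ ∈
        Submodule.span k {(1 : Matrix (Fin 3) (Fin 3) k)}
      have hz : ⁅x, c • (1 : Matrix (Fin 3) (Fin 3) k)⁆ = 0 := by
        simp [Ring.lie_def, mul_smul_comm, smul_mul_assoc]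
      rw [hz]
      exact zero_mem _ }

section LieAlgebra

variable {R L : Type*} [CommRing R] [LieRing L] [LieAlgebra R L]

theorem LieIdeal.isNilpotent_ad_mk (I : LieIdeal R L) {x : L}
    (h : IsNilpotent (LieAlgebra.ad R L x)) :
    IsNilpotent (LieAlgebra.ad R (L ⧸ I) (LieSubmodule.Quotient.mk x)) := by
  have hmapQ : LieAlgebra.ad R (L ⧸ I) (LieSubmodule.Quotient.mk x) =
      (I : Submodule R L).mapQ I (LieAlgebra.ad R L x)
        fun _ hy => Submodule.mem_comap.mpr (lie_mem_right R L I x _ hy) := by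
    ext; rfl
  exact hmapQ ▸ Module.End.IsNilpotent.mapQ _ h

theorem lie_eq_zero_of_mem_span_pair {x y : L} (hxy : ⁅x, y⁆ = 0) {u v : L}
    (hu : u ∈ Submodule.span R {x, y}) (hv : v ∈ Submodule.span R {x, y}) : ⁅u, v⁆ = 0 := by
  obtain ⟨a, b, rfl⟩ := Submodule.mem_span_pair.mp hu
  obtain ⟨c, d, rfl⟩ := Submodule.mem_span_pair.mp hv
  have hyx : ⁅y, x⁆ = 0 := by rw [← lie_skew, hxy, neg_zero]
  simp [hxy, hyx]

end LieAlgebra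

theorem finrank_span_pair {K V : Type*} [DivisionRing K] [AddCommGroup V] [Module K V] {x y : V}
    (h : LinearIndependent K ![x, y]) : Module.finrank K (Submodule.span K {x, y}) = 2 := by
  have h' := finrank_span_eq_card h
  rw [Matrix.range_cons_cons_empty] at h'
  simpa using h'

namespace PGL3Example

section CommRing

variable (R : Type*) [CommRing R]

def X : Matrix (Fin 3) (Fin 3) R := single 0 1 1 + single 1 2 1

def Y : Matrix (Fin 3) (Fin 3) R := single 1 0 1 + single 2 1 2

theorem smul_X_add_smul_Y (a b : R) :
    a • X R + b • Y R = !![0, a, 0; b, 0, a; 0, 2 * b, 0] := by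
  ext i j
  fin_cases i <;> fin_cases j <;> simp [X, Y, single, mul_comm]

theorem lie_X_Y : ⁅X R, Y R⁆ = diagonal ![1, 1, -2] := by
  have hX : X R = !![0, 1, 0; 0, 0, 1; 0, 0, 0] := by simpa using smul_X_add_smul_Y R 1 0
  have hY : Y R = !![0, 0, 0; 1, 0, 0; 0, 2, 0] := by simpa using smul_X_add_smul_Y R 0 1
  rw [Ring.lie_def, hX, hY]
  ext i j
  fin_cases i <;> fin_cases j <;> norm_num

theorem smul_X_add_smul_Y_pow_three (a b : R) :
    (a • X R + b • Y R) ^ 3 = (3 * a * b) • (a • X R + b • Y R) := by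
  rw [smul_X_add_smul_Y, pow_three]
  ext i j
  fin_cases i <;> fin_cases j <;> simp <;> ring

variable [CharP R 3]

theorem lie_X_Y_of_charP_three : ⁅X R, Y R⁆ = 1 := by
  have h : (-2 : R) = 1 := by linear_combination -CharP.ofNat_eq_zero R 3
  rw [lie_X_Y, h, ← diagonal_one]
  congr
  ext i
  fin_cases i <;> rfl

theorem smul_X_add_smul_Y_pow_three_of_charP_three (a b : R) : (a • X R + b • Y R) ^ 3 = 0 := by
  rw [smul_X_add_smul_Y_pow_three, CharP.ofNat_eq_zero R 3, zero_mul, zero_mul, zero_smul]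

end CommRing

variable (k : Type*) [Field k]

theorem linearIndependent_mk_X_Y :
    LinearIndependent k ![LieSubmodule.Quotient.mk (N := scalarLieIdeal k) (X k),
      LieSubmodule.Quotient.mk (N := scalarLieIdeal k) (Y k)] := by
  rw [LinearIndependent.pair_iff]
  intro s t hst
  obtain ⟨c, hc⟩ := Submodule.mem_span_singleton.mp <|
    (LieSubmodule.Quotient.mk_eq_zero' (N := scalarLieIdeal k)).mp
      (show LieSubmodule.Quotient.mk (s • X k + t • Y k) = 0 from hst)
  rw [smul_X_add_smul_Y] at hc
  exact ⟨by simpa using (congrFun₂ hc 0 1).symm, by simpa using (congrFun₂ hc 1 0).symm⟩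

theorem lie_mk_X_mk_Y [CharP k 3] :
    ⁅LieSubmodule.Quotient.mk (N := scalarLieIdeal k) (X k),
      LieSubmodule.Quotient.mk (N := scalarLieIdeal k) (Y k)⁆ = 0 := by
  rw [← LieSubmodule.Quotient.mk_bracket, LieSubmodule.Quotient.mk_eq_zero',
    lie_X_Y_of_charP_three]
  exact Submodule.mem_span_singleton_self _

end PGL3Example

/-- Over a field `k` of characteristic `3`, with `X := E₁₂ + E₂₃` and
`Y := E₂₁ + 2·E₃₂` in `𝔤𝔩₃(k)`: (i) `⁅X, Y⁆ = 1`; (ii) `(aX + bY)³ = 0` for all `a, b ∈ k`;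
consequently the images of `X` and `Y` in `𝔭𝔤𝔩₃(k) = 𝔤𝔩₃(k)/(k·1)` are linearly independent
and span a two-dimensional abelian Lie subalgebra of `𝔭𝔤𝔩₃(k)` all of whose elements are
ad-nilpotent. -/
theorem pgl3_char3_ad_nilpotent_abelian_subalgebra
    {k : Type*} [Field k] [CharP k 3] :
    letI X : Matrix (Fin 3) (Fin 3) k := single 0 1 1 + single 1 2 1
    letI Y : Matrix (Fin 3) (Fin 3) k := single 1 0 1 + single 2 1 2
    letI Xbar : Matrix (Fin 3) (Fin 3) k ⧸ scalarLieIdeal k :=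
      LieSubmodule.Quotient.mk (N := scalarLieIdeal k) X
    letI Ybar : Matrix (Fin 3) (Fin 3) k ⧸ scalarLieIdeal k :=
      LieSubmodule.Quotient.mk (N := scalarLieIdeal k) Y
    ⁅X, Y⁆ = (1 : Matrix (Fin 3) (Fin 3) k) ∧
    (∀ a b : k, (a • X + b • Y) ^ 3 = 0) ∧
    LinearIndependent k ![Xbar, Ybar] ∧
    Module.finrank k (Submodule.span k {Xbar, Ybar}) = 2 ∧
    (∀ x ∈ Submodule.span k {Xbar, Ybar}, ∀ y ∈ Submodule.span k {Xbar, Ybar},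
      ⁅x, y⁆ = 0) ∧
    (∀ x ∈ Submodule.span k {Xbar, Ybar},
      IsNilpotent (LieAlgebra.ad k (Matrix (Fin 3) (Fin 3) k ⧸ scalarLieIdeal k) x)) := by
  have hli := PGL3Example.linearIndependent_mk_X_Y k
  refine ⟨PGL3Example.lie_X_Y_of_charP_three k,
    PGL3Example.smul_X_add_smul_Y_pow_three_of_charP_three k, hli, finrank_span_pair hli,
    fun x hx y hy => lie_eq_zero_of_mem_span_pair (PGL3Example.lie_mk_X_mk_Y k) hx hy,
    fun x hx => ?_⟩
  obtain ⟨s, t, rfl⟩ := Submodule.mem_span_pair.mp hx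
  exact (scalarLieIdeal k).isNilpotent_ad_mk <| LieAlgebra.ad_nilpotent_of_nilpotent
    ⟨3, PGL3Example.smul_X_add_smul_Y_pow_three_of_charP_three k s t⟩
end

section
/- Let 𝔤 be a finite-dimensional Lie algebra over a field k with Killing form κ, let 𝔥 ⊆ 𝔤 be a Lie subalgebra, and let 𝔫 be an ideal of the Lie algebra 𝔥 such that every element of 𝔫 is ad-nilpotent in 𝔤. Then κ(x,y) = 0 for all x ∈ 𝔫 and y ∈ 𝔥; equivalently, 𝔥 ⊆ 𝔫^⊥. -/
/-! By Engel's theorem `𝔤` is a nilpotent module over the ideal `𝔫` of `𝔥`. The terms of its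
lower central series as an `𝔫`-module are `𝔥`-submodules, so `ad y` preserves each of them while
`ad x` moves each into the next; hence `ad x ∘ ad y` is nilpotent and has trace zero. -/

namespace LieModule

variable {R L M : Type*} [CommRing R] [LieRing L] [LieAlgebra R L]
  [AddCommGroup M] [Module R M] [LieRingModule L M] [LieModule R L M]

lemma toEnd_comp_toEnd_pow_apply_mem_lcs (I : LieIdeal R L) {x : L} (hx : x ∈ I) (y : L)
    (m : M) (k : ℕ) : ((toEnd R L M x ∘ₗ toEnd R L M y) ^ k) m ∈ I.lcs M k := by
  induction k with
  | zero => simp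
  | succ k ih =>
    rw [pow_succ', Module.End.mul_apply, LieIdeal.lcs_succ]
    exact LieSubmodule.lie_mem_lie hx ((I.lcs M k).lie_mem ih)

lemma isNilpotent_toEnd_comp_toEnd_of_mem_ideal (I : LieIdeal R L) [IsNilpotent I M]
    {x : L} (hx : x ∈ I) (y : L) : _root_.IsNilpotent (toEnd R L M x ∘ₗ toEnd R L M y) := by
  obtain ⟨k, hk⟩ := IsNilpotent.nilpotent R I M
  have hk' : I.lcs M k = ⊥ := by
    rw [← LieSubmodule.toSubmodule_eq_bot, I.coe_lcs_eq, hk, LieSubmodule.bot_toSubmodule]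
  refine ⟨k, LinearMap.ext fun m ↦ ?_⟩
  simpa [hk'] using toEnd_comp_toEnd_pow_apply_mem_lcs (M := M) I hx y m k

lemma traceForm_eq_zero_of_mem_ideal [IsReduced R] [Module.Free R M] [Module.Finite R M]
    (I : LieIdeal R L) [IsNilpotent I M] {x : L} (hx : x ∈ I) (y : L) :
    traceForm R L M x y = 0 :=
  (LinearMap.isNilpotent_trace_of_isNilpotent
    (isNilpotent_toEnd_comp_toEnd_of_mem_ideal I hx y)).eq_zero

end LieModule

/-- Let `𝔤` be a finite-dimensional Lie algebra over a field `k` with Killing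
form `κ`, let `𝔥 ⊆ 𝔤` be a Lie subalgebra and `𝔫` an ideal of `𝔥` all of whose elements are
ad-nilpotent in `𝔤`.  Then `κ(x, y) = 0` for all `x ∈ 𝔫` and `y ∈ 𝔥`; that is, `𝔥 ⊆ 𝔫^⊥`. -/
theorem killingForm_eq_zero_of_mem_nil_ideal
    {k L : Type*} [Field k] [LieRing L] [LieAlgebra k L] [FiniteDimensional k L]
    (h : LieSubalgebra k L)
    (n : Submodule k L)
    (hn_le : (n : Set L) ⊆ (h : Set L))
    (hn_ideal : ∀ x ∈ h, ∀ y ∈ n, ⁅x, y⁆ ∈ n)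
    (hn_nil : ∀ x ∈ n, IsNilpotent (LieAlgebra.ad k L x)) :
    ∀ x ∈ n, ∀ y ∈ h, killingForm k L x y = 0 := by
  intro x hx y hy
  let I : LieIdeal k h :=
    { toSubmodule := n.comap h.toSubmodule.subtype
      lie_mem := fun {a z} hz ↦ hn_ideal a a.2 z hz }
  have : LieModule.IsNilpotent I L :=
    LieModule.isNilpotent_iff_forall'.mpr fun z ↦ hn_nil z z.2
  -- The trace form of `h` acting on `L` is the restriction of the Killing form of `L`.
  exact LieModule.traceForm_eq_zero_of_mem_ideal (M := L) I (x := ⟨x, hn_le hx⟩) hx ⟨y, hy⟩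
end
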